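/- arXiv:0905.2258 — 2 statements merged into one kernel-verified Lean document; each statement's English description precedes it below -/
import Mathlib

section
/- Let M be a commutative monoid. If M is sharp (its only invertible element is the identity) and integral (cancellative), and M is finitely generated, then the set of irreducible elements of M generates M. -/
/-!
Choose finitely many nonzero generators, so that `M` is the image of an additive map
`π : ℕ^ι → M` whose only preimage of `0` is `0`. By cancellativity each fibre of `π` is an
antichain for the product order, hence finite by Dickson's lemma. The largest total degree of a
preimage is then a superadditive length on `M` which is positive away from `0`, and an element of
positive length that is not irreducible splits into two summands of smaller length.
-/

open Function

section

variable {M : Type*} [AddCommMonoid M]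

theorem closure_addIrreducible_eq_top_of_superadditive (ℓ : M → ℕ)
    (add_le : ∀ a b, ℓ a + ℓ b ≤ ℓ (a + b)) (pos : ∀ a, a ≠ 0 → 0 < ℓ a) :
    AddSubmonoid.closure {p : M | AddIrreducible p} = ⊤ := by
  have length_zero : ℓ 0 = 0 := by simpa using add_le 0 0
  have not_isAddUnit : ∀ a : M, a ≠ 0 → ¬IsAddUnit a := by
    intro a ha hunit
    obtain ⟨b, hab⟩ := hunit.exists_neg
    have := add_le a b
    rw [hab, length_zero] at this
    exact (pos _ ha).ne' (by omega)
  refine eq_top_iff.2 fun m _ ↦ (InvImage.wf ℓ wellFounded_lt).induction m fun m ih ↦ ?_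
  by_cases hm : m = 0
  · exact hm ▸ AddSubmonoid.zero_mem _
  obtain hirr | ⟨a, b, ha, hb, rfl⟩ := addIrreducible_or_factor (not_isAddUnit m hm)
  · exact AddSubmonoid.subset_closure hirr
  have := add_le a b
  have := pos a (by rintro rfl; exact ha isAddUnit_zero)
  have := pos b (by rintro rfl; exact hb isAddUnit_zero)
  exact AddSubmonoid.add_mem _ (ih a (show ℓ a < ℓ (a + b) by omega))
    (ih b (show ℓ b < ℓ (a + b) by omega))

section Presentation

variable {ι : Type*} {π : (ι → ℕ) →+ M}

theorem eq_of_le_of_map_eq [IsLeftCancelAdd M] (hπ : ∀ u, π u = 0 → u = 0) {u v : ι → ℕ}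
    (huv : u ≤ v) (h : π u = π v) : u = v := by
  have hsplit : u + (v - u) = v := add_tsub_cancel_of_le huv
  have : π (v - u) = 0 := by
    apply add_left_cancel (a := π u)
    rw [← map_add, hsplit, ← h, add_zero]
  exact le_antisymm huv (tsub_eq_zero_iff_le.1 (hπ _ this))

theorem finite_preimage_singleton [Finite ι] [IsLeftCancelAdd M] (hπ : ∀ u, π u = 0 → u = 0)
    (m : M) : (π ⁻¹' {m}).Finite :=
  WellQuasiOrderedLE.finite_of_isAntichain fun _ hu _ hv hne hle ↦
    hne (eq_of_le_of_map_eq hπ hle (hu.trans hv.symm))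

theorem exists_superadditive_length [Fintype ι] (hsurj : Surjective π)
    (hfin : ∀ m, (π ⁻¹' {m}).Finite) :
    ∃ ℓ : M → ℕ, (∀ a b, ℓ a + ℓ b ≤ ℓ (a + b)) ∧ ∀ a, a ≠ 0 → 0 < ℓ a := by
  let degree : (ι → ℕ) → ℕ := fun u ↦ ∑ i, u i
  let ℓ : M → ℕ := fun m ↦ sSup (degree '' (π ⁻¹' {m}))
  have bdd : ∀ m, BddAbove (degree '' (π ⁻¹' {m})) := fun m ↦ ((hfin m).image _).bddAbove
  have degree_le : ∀ u, degree u ≤ ℓ (π u) := fun u ↦ le_csSup (bdd _) ⟨u, rfl, rfl⟩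
  have exists_degree_eq : ∀ m, ∃ u, π u = m ∧ degree u = ℓ m := fun m ↦ by
    obtain ⟨u, hu⟩ := hsurj m
    exact Nat.sSup_mem (Set.Nonempty.image _ ⟨u, hu⟩) (bdd m)
  refine ⟨ℓ, fun a b ↦ ?_, fun a ha ↦ ?_⟩
  · obtain ⟨u, rfl, hu⟩ := exists_degree_eq a
    obtain ⟨v, rfl, hv⟩ := exists_degree_eq b
    calc ℓ (π u) + ℓ (π v) = degree (u + v) := by
          simp only [← hu, ← hv, degree, Pi.add_apply, Finset.sum_add_distrib]
      _ ≤ ℓ (π u + π v) := map_add π u v ▸ degree_le (u + v)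
  · obtain ⟨u, rfl⟩ := hsurj a
    have hu : u ≠ 0 := by rintro rfl; exact ha (map_zero π)
    obtain ⟨i, hi⟩ := Function.ne_iff.1 hu
    calc 0 < u i := Nat.pos_of_ne_zero hi
      _ ≤ degree u := Finset.single_le_sum (fun j _ ↦ Nat.zero_le (u j)) (Finset.mem_univ i)
      _ ≤ ℓ (π u) := degree_le u

end Presentation

theorem exists_surjective_addMonoidHom_of_fg [AddMonoid.FG M] [Subsingleton (AddUnits M)] :
    ∃ (T : Finset M) (π : (T → ℕ) →+ M), Surjective π ∧ ∀ u, π u = 0 → u = 0 := by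
  classical
  obtain ⟨S, hS⟩ := AddMonoid.FG.fg_top (M := M)
  have hT : AddSubmonoid.closure ((S.erase 0 : Finset M) : Set M) = ⊤ := by
    rw [← hS, Finset.coe_erase, ← AddSubmonoid.closure_insert_zero, Set.insert_sdiff_singleton,
      AddSubmonoid.closure_insert_zero]
  refine ⟨S.erase 0, (Fintype.linearCombination ℕ ((↑) : S.erase 0 → M)).toAddMonoidHom,
    fun m ↦ ?_, fun u hu ↦ funext fun i ↦ ?_⟩
  · obtain ⟨u, hu⟩ := AddSubmonoid.mem_closure_finset'.1 (hT ▸ AddSubmonoid.mem_top m)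
    exact ⟨u, by simp [Fintype.linearCombination_apply, hu]⟩
  · simp only [LinearMap.toAddMonoidHom_coe, Fintype.linearCombination_apply,
      Finset.sum_eq_zero_iff, Finset.mem_univ, forall_const] at hu
    show u i = 0
    by_contra hi
    obtain ⟨k, hk⟩ := Nat.exists_eq_succ_of_ne_zero hi
    have := hu i
    rw [hk, succ_nsmul] at this
    exact (Finset.mem_erase.1 i.2).1 (eq_zero_of_add_left this)

theorem closure_addIrreducible_eq_top_of_fg [AddMonoid.FG M] [IsLeftCancelAdd M]
    [Subsingleton (AddUnits M)] : AddSubmonoid.closure {p : M | AddIrreducible p} = ⊤ := by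
  obtain ⟨T, π, hsurj, hker⟩ := exists_surjective_addMonoidHom_of_fg (M := M)
  obtain ⟨ℓ, add_le, pos⟩ := exists_superadditive_length hsurj (finite_preimage_singleton hker)
  exact closure_addIrreducible_eq_top_of_superadditive ℓ add_le pos

end

/-- If a finitely generated commutative monoid `M` is sharp (its only invertible
element is `0`) and integral (cancellative), then its set of irreducible elements
generates `M`. -/
theorem irreducibles_generate {M : Type*} [AddCommMonoid M]
    (hsharp : ∀ m : M, (∃ m', m + m' = 0) → m = 0)
    (hcancel : ∀ x y y' : M, x + y = x + y' → y = y')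
    (hfg : AddMonoid.FG M) :
    AddSubmonoid.closure
      {p : M | p ≠ 0 ∧ ∀ a b : M, p = a + b → a = 0 ∨ b = 0} = ⊤ := by
  have : IsLeftCancelAdd M := ⟨hcancel⟩
  have : Subsingleton (AddUnits M) :=
    ⟨fun u v ↦ AddUnits.ext <| by rw [hsharp u ⟨_, u.add_neg⟩, hsharp v ⟨_, v.add_neg⟩]⟩
  convert closure_addIrreducible_eq_top_of_fg (M := M) using 3
  simp only [addIrreducible_iff, isAddUnit_iff_eq_zero]
end

section
/- Let A be a commutative ring and let M = A* ⊕ ℕ^r with the monoid structure where A* is the unit group of A (written multiplicatively, the sum being the product of units). Fix t_1,...,t_r ∈ A and define α: M → (A, ·) by α(u, (n_1,...,n_r)) = u · t_1^{n_1} ⋯ t_r^{n_r}. Then the automorphisms of M commuting with α and inducing the identity on M/A* are in bijection with r-tuples of units (ζ_1,...,ζ_r) ∈ (A*)^r satisfying ζ_i·t_i = t_i for all i; the automorphism corresponding to (ζ_i) sends the i-th generator e_i to ζ_i·e_i and is the identity on A*. -/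
/-!
An automorphism `φ` of `A* × ℕ^r` that fixes `A*` and is the identity on the `ℕ^r` factor is the
shear `(u, n) ↦ (u · c(n), n)` by the homomorphism `c(n) = (φ(1, n)).1`; compatibility with `α`
forces `φ` to fix `A*`, since `α(u, 0) = u`. As `ℕ^r` is free on the `eᵢ`, `c` is the monomial map
`n ↦ ∏ ζᵢ^{nᵢ}` for the unique `ζᵢ = c(eᵢ)`, and compatibility with `α` at `(1, eᵢ)` reads
`ζᵢ tᵢ = tᵢ`. Conversely, for such `ζ` the shear is compatible with `α`.
-/

open Finset

section Monomial

variable {ι M : Type*} [Fintype ι] [CommMonoid M]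

def monomialHom (ζ : ι → M) : Multiplicative (ι → ℕ) →* M where
  toFun n := ∏ i, ζ i ^ Multiplicative.toAdd n i
  map_one' := by simp
  map_mul' m n := by simp [pow_add, prod_mul_distrib]

theorem monomialHom_apply (ζ : ι → M) (n : Multiplicative (ι → ℕ)) :
    monomialHom ζ n = ∏ i, ζ i ^ Multiplicative.toAdd n i :=
  rfl

variable [DecidableEq ι]

theorem monomialHom_single (ζ : ι → M) (i : ι) :
    monomialHom ζ (Multiplicative.ofAdd (Pi.single i 1)) = ζ i := by
  rw [monomialHom_apply, Fintype.prod_eq_single i fun j hj => by simp [hj]]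
  simp

theorem monomialHom_injective : Function.Injective (monomialHom : (ι → M) → _) :=
  fun ζ ζ' h => funext fun i => by
    rw [← monomialHom_single ζ i, ← monomialHom_single ζ' i, h]

theorem eq_monomialHom (c : Multiplicative (ι → ℕ) →* M) :
    c = monomialHom fun i => c (Multiplicative.ofAdd (Pi.single i 1)) := by
  ext i
  exact (monomialHom_single (fun i => c (Multiplicative.ofAdd (Pi.single i 1))) i).symm

end Monomial

section Shear

variable {G N : Type*} [CommGroup G] [Monoid N]

def prodShear (c : N →* G) : G × N ≃* G × N where
  toFun p := (p.1 * c p.2, p.2)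
  invFun p := (p.1 * (c p.2)⁻¹, p.2)
  left_inv p := by simp
  right_inv p := by simp
  map_mul' p q := by
    ext
    · simp only [Prod.fst_mul, Prod.snd_mul, map_mul, mul_mul_mul_comm]
    · rfl

theorem prodShear_apply (c : N →* G) (p : G × N) : prodShear c p = (p.1 * c p.2, p.2) :=
  rfl

theorem eq_prodShear {φ : G × N →* G × N} (hG : ∀ u, (φ (u, 1)).1 = u)
    (hN : ∀ p, (φ p).2 = p.2) (p : G × N) :
    φ p = prodShear ((MonoidHom.fst G N).comp (φ.comp (MonoidHom.inr G N))) p := by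
  have hp : p = (p.1, 1) * (1, p.2) := by ext <;> simp
  refine Prod.ext ?_ (hN p)
  conv_lhs => rw [hp, map_mul]
  simp [prodShear_apply, hG]

end Shear

/-- Automorphisms of the log structure `M = A* ⊕ ℕ^r` (with structure map
`α(u, n) = u · ∏ tᵢ^{nᵢ}`) commuting with `α` and inducing the identity on
`M/A*` are in bijection with tuples of units `(ζ₁,...,ζ_r)` with `ζᵢ·tᵢ = tᵢ`;
the automorphism corresponding to `(ζᵢ)` sends `eᵢ` to `ζᵢ·eᵢ` and is the
identity on `A*`. -/
theorem log_structure_automorphisms {A : Type*} [CommRing A] (r : ℕ)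
    (t : Fin r → A) :
    (∀ φ : (Aˣ × Multiplicative (Fin r → ℕ)) ≃* (Aˣ × Multiplicative (Fin r → ℕ)),
      (∀ p, ((φ p).1 : A) * ∏ i, t i ^ (Multiplicative.toAdd (φ p).2 i)
          = (p.1 : A) * ∏ i, t i ^ (Multiplicative.toAdd p.2 i)) →
      (∀ p, (φ p).2 = p.2) →
      ∃! ζ : Fin r → Aˣ, (∀ i, (ζ i : A) * t i = t i) ∧
        ∀ p, φ p = (p.1 * ∏ i, ζ i ^ (Multiplicative.toAdd p.2 i), p.2)) ∧
    (∀ ζ : Fin r → Aˣ, (∀ i, (ζ i : A) * t i = t i) →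
      ∃ φ : (Aˣ × Multiplicative (Fin r → ℕ)) ≃* (Aˣ × Multiplicative (Fin r → ℕ)),
        (∀ p, ((φ p).1 : A) * ∏ i, t i ^ (Multiplicative.toAdd (φ p).2 i)
            = (p.1 : A) * ∏ i, t i ^ (Multiplicative.toAdd p.2 i)) ∧
        (∀ p, (φ p).2 = p.2) ∧
        ∀ p, φ p = (p.1 * ∏ i, ζ i ^ (Multiplicative.toAdd p.2 i), p.2)) := by
  refine ⟨fun φ hα hN => ?_, fun ζ hζ => ?_⟩
  · have hG : ∀ u, (φ (u, 1)).1 = u := fun u => Units.ext <| by simpa [hN] using hα (u, 1)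
    set c := (MonoidHom.fst _ _).comp (φ.toMonoidHom.comp (MonoidHom.inr Aˣ _))
    set ζ := fun i => c (Multiplicative.ofAdd (Pi.single i 1))
    have hφ : ∀ p, φ p = (p.1 * monomialHom ζ p.2, p.2) := fun p => by
      rw [← eq_monomialHom c]
      exact eq_prodShear (φ := φ.toMonoidHom) hG hN p
    refine ⟨ζ, ⟨fun i => ?_, hφ⟩, fun ζ' ⟨_, hφ'⟩ => monomialHom_injective ?_⟩
    · have h := hα (1, .ofAdd (Pi.single i 1))
      rw [hN, ← monomialHom_apply, monomialHom_single, Units.val_one, one_mul] at h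
      exact h
    · refine MonoidHom.ext fun n => ?_
      simpa [hφ, monomialHom_apply] using (congrArg Prod.fst (hφ' (1, n))).symm
  · refine ⟨prodShear (monomialHom ζ), fun p => ?_, fun _ => rfl, fun _ => rfl⟩
    simp only [prodShear_apply, Units.val_mul, Units.coe_prod, Units.val_pow_eq_pow_val,
      mul_assoc, ← prod_mul_distrib, ← mul_pow, hζ, monomialHom_apply]
end
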